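/- arXiv:1004.4400 — 4 statements merged into one kernel-verified Lean document; each statement's English description precedes it below -/
import Mathlib

section
/- For any real v and any b > 0, the following inequality holds for the standard normal CDF Φ: (Φ(v+b) − Φ(v)) / (Φ(v) − Φ(v−b)) < exp(b²/2 − b·v). Equivalently, Φ(v+b) − Φ(v) < exp(b²/2 − b·v) · (Φ(v) − Φ(v−b)). -/
open MeasureTheory ProbabilityTheory Real Set Filter

noncomputable def Φ (x : ℝ) : ℝ := ∫ t in Set.Iic x, Real.exp (-t^2/2) / Real.sqrt (2*Real.pi)

theorem stmt0 (v b : ℝ) (hb : 0 < b) :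
    (Φ (v+b) - Φ v) / (Φ v - Φ (v-b)) < Real.exp (b^2/2 - b*v) ∧
    Φ (v+b) - Φ v < Real.exp (b^2/2 - b*v) * (Φ v - Φ (v-b)) := by
  have hInt : Integrable (fun t : ℝ => Real.exp (-t^2/2) / Real.sqrt (2*Real.pi)) := by
    have h := (integrable_exp_neg_mul_sq (show (0:ℝ) < 1/2 by norm_num)).div_const
      (Real.sqrt (2*Real.pi))
    convert h using 2 with t
    ring_nf
  have hdiff : ∀ x y : ℝ,
      Φ x - Φ y = ∫ t in y..x, Real.exp (-t^2/2) / Real.sqrt (2*Real.pi) := by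
    intro x y
    unfold Φ
    have h := intervalIntegral.integral_Iic_sub_Iic (μ := volume)
      (f := fun t : ℝ => Real.exp (-t^2/2) / Real.sqrt (2*Real.pi)) (a := y) (b := x)
      hInt.integrableOn hInt.integrableOn
    linarith [h]
  have h1 : Φ (v+b) - Φ v
      = ∫ t in (v-b)..v, Real.exp (-(t+b)^2/2) / Real.sqrt (2*Real.pi) := by
    have h := intervalIntegral.integral_comp_add_right (a := v-b) (b := v)
      (f := fun t : ℝ => Real.exp (-t^2/2) / Real.sqrt (2*Real.pi)) b
    simp only [sub_add_cancel] at h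
    rw [hdiff]
    linarith [h]
  have h2 : Φ v - Φ (v-b)
      = ∫ t in (v-b)..v, Real.exp (-t^2/2) / Real.sqrt (2*Real.pi) := hdiff v (v-b)
  have hlt : v - b < v := by linarith
  have hii : IntervalIntegrable (fun t : ℝ => Real.exp (-t^2/2) / Real.sqrt (2*Real.pi))
      volume (v-b) v := hInt.intervalIntegrable
  have hii2 : IntervalIntegrable (fun t : ℝ => Real.exp (-(t+b)^2/2) / Real.sqrt (2*Real.pi))
      volume (v-b) v := (hInt.comp_add_right b).intervalIntegrable
  have hpos2 : 0 < Φ v - Φ (v-b) := by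
    rw [h2]
    refine intervalIntegral.intervalIntegral_pos_of_pos_on hii (fun x _ => ?_) hlt
    exact div_pos (Real.exp_pos _) (Real.sqrt_pos.mpr (by positivity))
  set C := Real.exp (b^2/2 - b*v) with hC
  have key : Φ (v+b) - Φ v < C * (Φ v - Φ (v-b)) := by
    rw [h1, h2, ← intervalIntegral.integral_const_mul, ← sub_pos,
      ← intervalIntegral.integral_sub (hii.const_mul C) hii2]
    refine intervalIntegral.intervalIntegral_pos_of_pos_on
      ((hii.const_mul C).sub hii2) (fun x hx => ?_) hlt
    have hx1 : v - b < x := hx.1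
    rw [sub_pos, hC, ← mul_div_assoc,
      div_lt_div_iff_of_pos_right (Real.sqrt_pos.mpr (by positivity)), ← Real.exp_add]
    apply Real.exp_lt_exp.mpr
    nlinarith
  exact ⟨(div_lt_iff₀ hpos2).mpr key, key⟩
end

section
/- For any real v and any b > 0, the standard normal CDF satisfies Φ(v) < (e^{b²}·Φ(v+b) + e^{b²/2 − b·v}·Φ(v−b)) / (1 + e^{b²/2 − b·v}). -/
/-! The function
`G(w) = e^{b²} Φ(w+b) + e^{b²/2 - bw} Φ(w-b) - (1 + e^{b²/2 - bw}) Φ(w)`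
has derivative `b e^{b²/2 - bw} (Φ(w) - Φ(w-b)) > 0`, because the density terms cancel
exactly: `e^{b²} φ(w+b) = e^{b²/2 - bw} φ(w)` and `e^{b²/2 - bw} φ(w-b) = φ(w)`.
Since `Φ` decays faster than any exponential at `-∞`, `G(w) → 0` as `w → -∞`;
being strictly increasing, `G` is positive everywhere, which is the claim. -/

open MeasureTheory ProbabilityTheory Real Set Filter

open Topology

local notation "φ" => gaussianPDFReal 0 1

lemma gaussianPDFReal_zero_one_apply (t : ℝ) : φ t = exp (-t ^ 2 / 2) / √(2 * π) := by
  simp [gaussianPDFReal, div_eq_inv_mul]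

lemma gaussianPDFReal_zero_one_add (w s : ℝ) : φ (w + s) = exp (-(s * w) - s ^ 2 / 2) * φ w := by
  rw [gaussianPDFReal_zero_one_apply, gaussianPDFReal_zero_one_apply, mul_div_assoc',
    ← exp_add]
  ring_nf

lemma continuous_gaussianPDFReal (μ : ℝ) (v : NNReal) : Continuous (gaussianPDFReal μ v) := by
  unfold gaussianPDFReal; fun_prop

lemma Φ_eq_setIntegral_gaussianPDFReal (x : ℝ) : Φ x = ∫ t in Iic x, φ t := by
  simp only [Φ, gaussianPDFReal_zero_one_apply]

lemma Φ_nonneg (x : ℝ) : 0 ≤ Φ x := by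
  rw [Φ_eq_setIntegral_gaussianPDFReal]
  exact setIntegral_nonneg measurableSet_Iic fun t _ => gaussianPDFReal_nonneg 0 1 t

lemma hasDerivAt_Φ (x : ℝ) : HasDerivAt Φ (φ x) x := by
  have hΦ : Φ = fun u => Φ 0 + ∫ t in (0 : ℝ)..u, φ t := by
    ext u
    simp only [Φ_eq_setIntegral_gaussianPDFReal]
    rw [← intervalIntegral.integral_Iic_sub_Iic (integrable_gaussianPDFReal 0 1).integrableOn
      (integrable_gaussianPDFReal 0 1).integrableOn]
    ring
  rw [hΦ]
  exact (intervalIntegral.integral_hasDerivAt_right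
    (integrable_gaussianPDFReal 0 1).intervalIntegrable
    ((continuous_gaussianPDFReal 0 1).stronglyMeasurableAtFilter _ _)
    (continuous_gaussianPDFReal 0 1).continuousAt).const_add _

lemma Φ_strictMono : StrictMono Φ :=
  strictMono_of_hasDerivAt_pos hasDerivAt_Φ fun x => gaussianPDFReal_pos 0 1 x one_ne_zero

lemma Φ_le_mul_exp_mul {c : ℝ} (hc : 0 < c) (x : ℝ) :
    Φ x ≤ exp (c ^ 2 / 2) / √(2 * π) / c * exp (c * x) := by
  have hφ : ∀ t, φ t ≤ exp (c ^ 2 / 2) / √(2 * π) * exp (c * t) := fun t => by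
    rw [gaussianPDFReal_zero_one_apply, div_mul_eq_mul_div, ← exp_add]
    gcongr
    nlinarith [sq_nonneg (t + c)]
  calc Φ x ≤ ∫ t in Iic x, exp (c ^ 2 / 2) / √(2 * π) * exp (c * t) := by
        rw [Φ_eq_setIntegral_gaussianPDFReal]
        exact setIntegral_mono_on (integrable_gaussianPDFReal 0 1).integrableOn
          ((integrableOn_exp_mul_Iic hc x).const_mul _) measurableSet_Iic fun t _ => hφ t
    _ = _ := by rw [integral_const_mul, integral_exp_mul_Iic hc]; ring

lemma tendsto_exp_mul_mul_Φ_add_atBot (a d : ℝ) :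
    Tendsto (fun w => exp (a * w) * Φ (w + d)) atBot (𝓝 0) := by
  set c := |a| + 1
  have hc : 0 < c := by positivity
  set K := exp (c ^ 2 / 2) / √(2 * π) / c * exp (c * d)
  have hbound : ∀ w, exp (a * w) * Φ (w + d) ≤ K * exp ((a + c) * w) := fun w => by
    calc exp (a * w) * Φ (w + d)
        ≤ exp (a * w) * (exp (c ^ 2 / 2) / √(2 * π) / c * exp (c * (w + d))) := by
          gcongr; exact Φ_le_mul_exp_mul hc _
      _ = K * exp ((a + c) * w) := by
          simp only [K, mul_add, add_mul, exp_add]; ring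
  have hK : Tendsto (fun w => K * exp ((a + c) * w)) atBot (𝓝 0) := by
    have hac : 0 < a + c := by simp only [c]; linarith [neg_abs_le a]
    simpa using (tendsto_exp_atBot.comp (tendsto_id.const_mul_atBot hac)).const_mul K
  exact tendsto_of_tendsto_of_tendsto_of_le_of_le tendsto_const_nhds hK
    (fun w => mul_nonneg (exp_pos _).le (Φ_nonneg _)) hbound

noncomputable def mixtureGap (b w : ℝ) : ℝ :=
  exp (b ^ 2) * Φ (w + b) + exp (b ^ 2 / 2 - b * w) * Φ (w - b)
    - (1 + exp (b ^ 2 / 2 - b * w)) * Φ w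

lemma hasDerivAt_mixtureGap (b w : ℝ) :
    HasDerivAt (mixtureGap b) (b * exp (b ^ 2 / 2 - b * w) * (Φ w - Φ (w - b))) w := by
  have hE : HasDerivAt (fun w => exp (b ^ 2 / 2 - b * w)) (-b * exp (b ^ 2 / 2 - b * w)) w := by
    simpa [mul_comm] using (((hasDerivAt_id w).const_mul b).const_sub (b ^ 2 / 2)).exp
  have hG := (((hasDerivAt_Φ (w + b)).comp_add_const w b).const_mul (exp (b ^ 2))).add
    (hE.mul ((hasDerivAt_Φ (w - b)).comp_sub_const w b)) |>.sub
    ((hE.const_add 1).mul (hasDerivAt_Φ w))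
  have hplus : exp (b ^ 2) * φ (w + b) = exp (b ^ 2 / 2 - b * w) * φ w := by
    rw [gaussianPDFReal_zero_one_add, ← mul_assoc, ← exp_add]; ring_nf
  have hminus : exp (b ^ 2 / 2 - b * w) * φ (w - b) = φ w := by
    rw [sub_eq_add_neg w b, gaussianPDFReal_zero_one_add, ← mul_assoc, ← exp_add,
      show b ^ 2 / 2 - b * w + (-(-b * w) - (-b) ^ 2 / 2) = 0 by ring, exp_zero, one_mul]
  exact hG.congr_deriv (by rw [hplus, hminus]; ring)

lemma tendsto_mixtureGap_atBot (b : ℝ) : Tendsto (mixtureGap b) atBot (𝓝 0) := by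
  have h := (((tendsto_exp_mul_mul_Φ_add_atBot 0 b).const_mul (exp (b ^ 2))).add
    ((tendsto_exp_mul_mul_Φ_add_atBot (-b) (-b)).const_mul (exp (b ^ 2 / 2)))).sub
    ((tendsto_exp_mul_mul_Φ_add_atBot 0 0).add
      ((tendsto_exp_mul_mul_Φ_add_atBot (-b) 0).const_mul (exp (b ^ 2 / 2))))
  simp only [mul_zero, add_zero, sub_zero] at h
  refine h.congr fun w => ?_
  simp only [mixtureGap, zero_mul, exp_zero, one_mul, sub_eq_add_neg, exp_add]
  ring_nf

lemma mixtureGap_pos {b : ℝ} (hb : 0 < b) (w : ℝ) : 0 < mixtureGap b w := by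
  have hmono : StrictMono (mixtureGap b) := strictMono_of_hasDerivAt_pos
    (hasDerivAt_mixtureGap b) fun w =>
      mul_pos (mul_pos hb (exp_pos _)) (sub_pos.mpr (Φ_strictMono (by linarith)))
  exact ((hmono.monotone.le_of_tendsto (tendsto_mixtureGap_atBot b)) (w - 1)).trans_lt
    (hmono (by linarith))

theorem stmt1 (v b : ℝ) (hb : 0 < b) :
    Φ v < (Real.exp (b^2) * Φ (v+b) + Real.exp (b^2/2 - b*v) * Φ (v-b)) /
      (1 + Real.exp (b^2/2 - b*v)) := by
  rw [lt_div_iff₀ (by positivity)]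
  have := mixtureGap_pos hb v
  rw [mixtureGap] at this
  linarith
end

section
/- Let S be lognormal with log S ~ N(a, b²), b > 0, and K > 0. The variance-minimizing hedge ratio h* = (A₄ − K·A₂ + (A₂+A₃)(K·A₁ − A₂))/(A₄ + A₅ − (A₂+A₃)²) can be rewritten as h* = (e^{b²}Φ(v+b) − Φ(v) − e^{b²/2 − bv}(Φ(v) − Φ(v−b))) / (e^{b²} − 1), where v = b + (a − log K)/b and Φ is the standard normal CDF. -/
open MeasureTheory ProbabilityTheory Real Set Filter

open scoped NNReal

/-!
With `L = (log K - a) / b`, the events `K < S` and `S ≤ K` are `Z > L` and `Z ≤ L` for a standard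
normal `Z`. Exponential tilting, `exp (β z) φ(z) = exp (β² / 2) φ(z - β)`, turns the partial
moments of `S = exp (a + b Z)` over these half-lines into values of `Φ`, and the numerator and
denominator of the hedge ratio then share the factor `exp (2 a + b²)`.
-/

namespace ProbabilityTheory

variable {μ : ℝ} {v : ℝ≥0}

lemma gaussianReal_real_eq_setIntegral (hv : v ≠ 0) (s : Set ℝ) :
    (gaussianReal μ v).real s = ∫ x in s, gaussianPDFReal μ v x := by
  rw [measureReal_def, gaussianReal_apply_eq_integral μ hv,
    ENNReal.toReal_ofReal (integral_nonneg fun _ ↦ gaussianPDFReal_nonneg μ v _)]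

lemma exp_mul_mul_gaussianPDFReal (hv : v ≠ 0) (β x : ℝ) :
    exp (β * x) * gaussianPDFReal μ v x =
      exp (μ * β + v * β ^ 2 / 2) * gaussianPDFReal (μ + v * β) v x := by
  have hv' : (v : ℝ) ≠ 0 := mod_cast hv
  simp only [gaussianPDFReal]
  rw [mul_left_comm, ← exp_add, mul_left_comm, ← exp_add]
  congr 2
  field_simp
  ring

lemma setIntegral_exp_mul_gaussianReal (hv : v ≠ 0) (β : ℝ) {s : Set ℝ} (hs : MeasurableSet s) :
    ∫ x in s, exp (β * x) ∂gaussianReal μ v =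
      exp (μ * β + v * β ^ 2 / 2) * (gaussianReal (μ + v * β) v).real s := by
  rw [gaussianReal_real_eq_setIntegral hv, ← integral_const_mul, ← integral_indicator hs,
    ← integral_indicator hs, integral_gaussianReal_eq_integral_smul hv]
  congr 1 with x
  by_cases hx : x ∈ s
  · simp [hx, mul_comm (gaussianPDFReal μ v x), exp_mul_mul_gaussianPDFReal hv]
  · simp [hx]

lemma setIntegral_exp_add_mul_gaussianReal (α β : ℝ) {s : Set ℝ} (hs : MeasurableSet s) :
    ∫ x in s, exp (α + β * x) ∂gaussianReal 0 1 =
      exp (α + β ^ 2 / 2) * (gaussianReal β 1).real s := by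
  simp_rw [exp_add α, integral_const_mul, setIntegral_exp_mul_gaussianReal one_ne_zero β hs]
  simp [mul_assoc]

lemma setIntegral_add_compl_exp_add_mul_gaussianReal (α β : ℝ) {s : Set ℝ} (hs : MeasurableSet s) :
    ∫ x in s, exp (α + β * x) ∂gaussianReal 0 1 + ∫ x in sᶜ, exp (α + β * x) ∂gaussianReal 0 1 =
      exp (α + β ^ 2 / 2) := by
  rw [setIntegral_exp_add_mul_gaussianReal α β hs,
    setIntegral_exp_add_mul_gaussianReal α β hs.compl, ← mul_add,
    measureReal_add_measureReal_compl hs, probReal_univ, mul_one]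

end ProbabilityTheory

lemma Phi_eq_gaussianReal_real_Iic (x : ℝ) : Φ x = (gaussianReal 0 1).real (Iic x) := by
  rw [gaussianReal_real_eq_setIntegral one_ne_zero, Φ]
  congr 1 with t
  simp [gaussianPDFReal, div_eq_inv_mul, mul_comm]

lemma gaussianReal_real_Ioi_eq_Phi (μ c : ℝ) : (gaussianReal μ 1).real (Ioi c) = Φ (μ - c) := by
  have hmap : (gaussianReal 0 1).map (μ - ·) = gaussianReal μ 1 := by
    simpa using gaussianReal_map_const_sub (μ := 0) (v := 1) μ
  have := nullSingletonClass_gaussianReal (μ := 0) (one_ne_zero (α := ℝ≥0))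
  rw [Phi_eq_gaussianReal_real_Iic, ← hmap, map_measureReal_apply (by fun_prop) measurableSet_Ioi,
    ← measureReal_congr Iio_ae_eq_Iic]
  congr 1 with x
  simp

lemma setIntegral_Ioi_exp_add_mul_gaussianReal (α β c : ℝ) :
    ∫ x in Ioi c, exp (α + β * x) ∂gaussianReal 0 1 = exp (α + β ^ 2 / 2) * Φ (β - c) := by
  rw [setIntegral_exp_add_mul_gaussianReal α β measurableSet_Ioi, gaussianReal_real_Ioi_eq_Phi]

lemma setOf_lt_exp_add_mul {a b K : ℝ} (hb : 0 < b) (hK : 0 < K) :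
    {z | K < exp (a + b * z)} = Ioi ((log K - a) / b) := by
  ext z
  rw [mem_ofPred_eq, ← log_lt_iff_lt_exp hK, mem_Ioi, div_lt_iff₀ hb]
  constructor <;> intro <;> linarith

lemma hedgeRatio_eq_of_lognormal_moments {a b K v p q r : ℝ} (hK : 0 < K) (hb : b ≠ 0)
    (hv : v = b + (a - log K) / b) :
    (exp (2 * (a + b ^ 2)) * r - K * (exp (a + b ^ 2 / 2) * q) +
        exp (a + b ^ 2 / 2) * (K * p - exp (a + b ^ 2 / 2) * q)) /
      (exp (2 * (a + b ^ 2)) - exp (a + b ^ 2 / 2) ^ 2) =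
    (exp (b ^ 2) * r - q - exp (b ^ 2 / 2 - b * v) * (q - p)) / (exp (b ^ 2) - 1) := by
  set E := exp (a + b ^ 2 / 2)
  have hE2 : exp (2 * (a + b ^ 2)) = E ^ 2 * exp (b ^ 2) := by
    rw [sq E, ← exp_add, ← exp_add]
    ring_nf
  have hlogK : log K = a + b ^ 2 - b * v := by
    rw [hv]
    field_simp
    ring
  have hKE : K * E = E ^ 2 * exp (b ^ 2 / 2 - b * v) := by
    rw [← exp_log hK, hlogK, sq E, ← exp_add, ← exp_add, ← exp_add]
    ring_nf
  have hnum : E ^ 2 * exp (b ^ 2) * r - K * (E * q) + E * (K * p - E * q) =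
      E ^ 2 * (exp (b ^ 2) * r - q - exp (b ^ 2 / 2 - b * v) * (q - p)) := by
    linear_combination (p - q) * hKE
  rw [hE2, hnum, show E ^ 2 * exp (b ^ 2) - E ^ 2 = E ^ 2 * (exp (b ^ 2) - 1) by ring,
    mul_div_mul_left _ _ (by positivity)]

theorem stmt11 (a b K : ℝ) (hb : 0 < b) (hK : 0 < K)
    (S : ℝ → ℝ) (hS : S = fun z => Real.exp (a + b*z))
    (A1 A2 A3 A4 A5 : ℝ)
    (hA1 : A1 = ((gaussianReal 0 1) {z | K < S z}).toReal)
    (hA2 : A2 = ∫ z in {z | K < S z}, S z ∂(gaussianReal 0 1))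
    (hA3 : A3 = ∫ z in {z | S z ≤ K}, S z ∂(gaussianReal 0 1))
    (hA4 : A4 = ∫ z in {z | K < S z}, (S z)^2 ∂(gaussianReal 0 1))
    (hA5 : A5 = ∫ z in {z | S z ≤ K}, (S z)^2 ∂(gaussianReal 0 1))
    (v : ℝ) (hv : v = b + (a - Real.log K)/b) :
    (A4 - K*A2 + (A2 + A3)*(K*A1 - A2)) / (A4 + A5 - (A2 + A3)^2) =
      (Real.exp (b^2) * Φ (v+b) - Φ v - Real.exp (b^2/2 - b*v) * (Φ v - Φ (v-b))) /
        (Real.exp (b^2) - 1) := by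
  have hL : (log K - a) / b = b - v := by
    rw [hv]
    field_simp
    ring
  have hAbove : {z | K < S z} = Ioi (b - v) := by rw [hS, setOf_lt_exp_add_mul hb hK, hL]
  have hBelow : {z | S z ≤ K} = (Ioi (b - v))ᶜ := by
    rw [← hAbove, compl_ofPred]
    simp_rw [not_lt]
  have hS2 : ∀ z, S z ^ 2 = exp (2 * a + 2 * b * z) := fun z ↦ by
    rw [hS, ← exp_nat_mul]
    ring_nf
  have h2a2b : 2 * a + (2 * b) ^ 2 / 2 = 2 * (a + b ^ 2) := by ring
  simp only [hAbove, hBelow, hS2] at hA1 hA2 hA3 hA4 hA5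
  simp only [hS] at hA2 hA3
  have h1 : A1 = Φ (v - b) := by
    rw [hA1, ← measureReal_def, gaussianReal_real_Ioi_eq_Phi, zero_sub, neg_sub]
  have h2 : A2 = exp (a + b ^ 2 / 2) * Φ v := by
    rw [hA2, setIntegral_Ioi_exp_add_mul_gaussianReal, sub_sub_cancel]
  have h4 : A4 = exp (2 * (a + b ^ 2)) * Φ (v + b) := by
    rw [hA4, setIntegral_Ioi_exp_add_mul_gaussianReal, h2a2b]
    ring_nf
  have h23 : A2 + A3 = exp (a + b ^ 2 / 2) := by
    rw [hA2, hA3, setIntegral_add_compl_exp_add_mul_gaussianReal _ _ measurableSet_Ioi]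
  have h45 : A4 + A5 = exp (2 * (a + b ^ 2)) := by
    rw [hA4, hA5, setIntegral_add_compl_exp_add_mul_gaussianReal _ _ measurableSet_Ioi, h2a2b]
  rw [h23, h45, h1, h2, h4]
  exact hedgeRatio_eq_of_lognormal_moments hK hb.ne' hv
end

section
/- Let S be lognormal with log S ~ N(a, b²), b > 0, K > 0, and F(h) = −max(0, S−K) + h·S with h = h*(K) the variance minimizer. Then the minimized standard deviation √Var(F(h*(K))) tends to 0 as K → 0⁺. -/
open MeasureTheory ProbabilityTheory Real Set Filter

/-!
The ratio `h*(K)` is the minimum-variance hedge ratio `Cov((S - K)⁺, S) / Var S`, so the hedged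
portfolio has variance at most that of `F(1) = S - (S - K)⁺ = min S K`. The latter takes values in
`[0, K]`, hence by Popoviciu's inequality its variance is at most `(K / 2)²`, and the minimized
standard deviation is at most `K / 2`.
-/

open scoped ENNReal NNReal Topology

section Hedging

variable {Ω : Type*} {mΩ : MeasurableSpace Ω} {μ : Measure Ω} {X Y : Ω → ℝ}

lemma variance_neg_add_const_mul [IsFiniteMeasure μ] (hX : MemLp X 2 μ) (hY : MemLp Y 2 μ)
    (t : ℝ) :
    Var[fun ω ↦ -X ω + t * Y ω; μ] = Var[X; μ] - 2 * t * cov[X, Y; μ] + t ^ 2 * Var[Y; μ] := by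
  rw [variance_fun_add (X := fun ω ↦ -X ω) hX.neg (hY.const_mul t), variance_fun_neg,
    variance_const_mul, covariance_fun_neg_left, covariance_const_mul_right]
  ring

theorem variance_neg_add_cov_div_variance_mul_le [IsFiniteMeasure μ] (hX : MemLp X 2 μ)
    (hY : MemLp Y 2 μ) (hY₀ : 0 < Var[Y; μ]) (t : ℝ) :
    Var[fun ω ↦ -X ω + cov[X, Y; μ] / Var[Y; μ] * Y ω; μ] ≤ Var[fun ω ↦ -X ω + t * Y ω; μ] := by
  rw [variance_neg_add_const_mul hX hY, variance_neg_add_const_mul hX hY]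
  have hgap : Var[X; μ] - 2 * t * cov[X, Y; μ] + t ^ 2 * Var[Y; μ]
      - (Var[X; μ] - 2 * (cov[X, Y; μ] / Var[Y; μ]) * cov[X, Y; μ]
        + (cov[X, Y; μ] / Var[Y; μ]) ^ 2 * Var[Y; μ])
      = (t * Var[Y; μ] - cov[X, Y; μ]) ^ 2 / Var[Y; μ] := by
    field_simp
    ring
  have : 0 ≤ (t * Var[Y; μ] - cov[X, Y; μ]) ^ 2 / Var[Y; μ] := by positivity
  linarith

end Hedging

section CallOption

variable {Ω : Type*} {mΩ : MeasurableSpace Ω} {μ : Measure Ω} {S : Ω → ℝ} {K : ℝ}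

lemma MeasureTheory.MemLp.max_zero_sub_const [IsFiniteMeasure μ] {p : ℝ≥0∞} (hS : MemLp S p μ)
    (K : ℝ) : MemLp (fun ω ↦ max 0 (S ω - K)) p μ := by
  convert (hS.sub (memLp_const K)).pos_part using 2 with ω
  exact max_comm _ _

lemma integral_mul_max_zero_sub (g : Ω → ℝ) (hS : Measurable S) (K : ℝ) :
    ∫ ω, g ω * max 0 (S ω - K) ∂μ = ∫ ω in {ω | K < S ω}, g ω * (S ω - K) ∂μ := by
  rw [← integral_indicator (measurableSet_lt measurable_const hS)]
  congr 1 with ω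
  by_cases h : K < S ω
  · simp [h, max_eq_right (sub_nonneg.2 h.le)]
  · simp [h, max_eq_left (sub_nonpos.2 (not_lt.1 h))]

lemma setIntegral_lt_add_setIntegral_le {f : Ω → ℝ} (hf : Integrable f μ) (hS : Measurable S)
    (K : ℝ) :
    ∫ ω in {ω | K < S ω}, f ω ∂μ + ∫ ω in {ω | S ω ≤ K}, f ω ∂μ = ∫ ω, f ω ∂μ := by
  have : {ω | S ω ≤ K} = {ω | K < S ω}ᶜ := by ext; simp
  rw [this, integral_add_compl (measurableSet_lt measurable_const hS) hf]

lemma covariance_max_zero_sub [IsProbabilityMeasure μ] (hS : MemLp S 2 μ) (hSm : Measurable S)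
    (K : ℝ) :
    cov[fun ω ↦ max 0 (S ω - K), S; μ] =
      (∫ ω in {ω | K < S ω}, S ω ^ 2 ∂μ - K * ∫ ω in {ω | K < S ω}, S ω ∂μ)
        - (∫ ω in {ω | K < S ω}, S ω ∂μ - K * μ.real {ω | K < S ω}) * ∫ ω, S ω ∂μ := by
  have hS1 := hS.integrable one_le_two
  have hmean : ∫ ω, max 0 (S ω - K) ∂μ
      = ∫ ω in {ω | K < S ω}, S ω ∂μ - K * μ.real {ω | K < S ω} := by
    calc ∫ ω, max 0 (S ω - K) ∂μ = ∫ ω, 1 * max 0 (S ω - K) ∂μ := by simp only [one_mul]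
      _ = ∫ ω in {ω | K < S ω}, 1 * (S ω - K) ∂μ := integral_mul_max_zero_sub _ hSm K
      _ = _ := by
        simp only [one_mul]
        rw [integral_sub hS1.integrableOn (integrableOn_const (measure_ne_top _ _)),
          setIntegral_const, smul_eq_mul, mul_comm]
  have hmixed : ∫ ω, max 0 (S ω - K) * S ω ∂μ
      = ∫ ω in {ω | K < S ω}, S ω ^ 2 ∂μ - K * ∫ ω in {ω | K < S ω}, S ω ∂μ := by
    calc ∫ ω, max 0 (S ω - K) * S ω ∂μ = ∫ ω, S ω * max 0 (S ω - K) ∂μ := by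
          simp only [mul_comm]
      _ = ∫ ω in {ω | K < S ω}, S ω * (S ω - K) ∂μ := integral_mul_max_zero_sub S hSm K
      _ = _ := by
        simp only [mul_sub, ← sq]
        rw [integral_sub hS.integrable_sq.integrableOn (hS1.integrableOn.mul_const K),
          integral_mul_const, mul_comm]
  rw [covariance_eq_sub (hS.max_zero_sub_const K) hS, hmean]
  simp only [Pi.mul_apply]
  rw [hmixed]

/-- The right-hand side is the paper's `h*(K)`, written with the partial moments `A₁, …, A₅`. -/
lemma covariance_max_zero_sub_div_variance [IsProbabilityMeasure μ] (hS : MemLp S 2 μ)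
    (hSm : Measurable S) (K : ℝ) :
    cov[fun ω ↦ max 0 (S ω - K), S; μ] / Var[S; μ] =
      (∫ ω in {ω | K < S ω}, S ω ^ 2 ∂μ - K * ∫ ω in {ω | K < S ω}, S ω ∂μ
        + (∫ ω in {ω | K < S ω}, S ω ∂μ + ∫ ω in {ω | S ω ≤ K}, S ω ∂μ)
          * (K * (μ {ω | K < S ω}).toReal - ∫ ω in {ω | K < S ω}, S ω ∂μ))
      / (∫ ω in {ω | K < S ω}, S ω ^ 2 ∂μ + ∫ ω in {ω | S ω ≤ K}, S ω ^ 2 ∂μ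
        - (∫ ω in {ω | K < S ω}, S ω ∂μ + ∫ ω in {ω | S ω ≤ K}, S ω ∂μ) ^ 2) := by
  rw [covariance_max_zero_sub hS hSm, variance_eq_sub hS,
    setIntegral_lt_add_setIntegral_le (hS.integrable one_le_two) hSm,
    setIntegral_lt_add_setIntegral_le hS.integrable_sq hSm, measureReal_def]
  simp only [Pi.pow_apply]
  ring

lemma variance_min_le [IsProbabilityMeasure μ] (hS : AEMeasurable S μ) (hS₀ : ∀ ω, 0 ≤ S ω)
    (hK : 0 ≤ K) : Var[fun ω ↦ -max 0 (S ω - K) + 1 * S ω; μ] ≤ (K / 2) ^ 2 := by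
  have hbdd : ∀ ω, -max 0 (S ω - K) + 1 * S ω ∈ Icc 0 K := by
    intro ω
    rcases le_total (S ω) K with h | h
    · simp [h, hS₀ ω]
    · simp [max_eq_right (sub_nonneg.2 h), hK]
  simpa using variance_le_sq_of_bounded (ae_of_all μ hbdd) (by fun_prop)

theorem variance_call_hedge_le [IsProbabilityMeasure μ] (hS : MemLp S 2 μ) (hS₀ : ∀ ω, 0 ≤ S ω)
    (hSvar : 0 < Var[S; μ]) (hK : 0 ≤ K) :
    Var[fun ω ↦ -max 0 (S ω - K) + cov[fun ω ↦ max 0 (S ω - K), S; μ] / Var[S; μ] * S ω; μ]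
      ≤ (K / 2) ^ 2 :=
  (variance_neg_add_cov_div_variance_mul_le (hS.max_zero_sub_const K) hS hSvar 1).trans
    (variance_min_le hS.aemeasurable hS₀ hK)

end CallOption

section Lognormal

variable {m : ℝ} {v : ℝ≥0}

lemma integral_exp_add_mul_gaussianReal (a b : ℝ) :
    ∫ x, exp (a + b * x) ∂gaussianReal m v = exp (a + m * b + v * b ^ 2 / 2) := by
  have h := congrFun (mgf_fun_id_gaussianReal (μ := m) (v := v)) b
  simp only [mgf] at h
  simp only [exp_add a, integral_const_mul, h, add_assoc]

lemma exp_add_mul_sq (a b x : ℝ) : exp (a + b * x) ^ 2 = exp (2 * a + 2 * b * x) := by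
  rw [← exp_nat_mul]
  ring_nf

lemma memLp_exp_add_mul_gaussianReal (a b : ℝ) :
    MemLp (fun x ↦ exp (a + b * x)) 2 (gaussianReal m v) := by
  refine (memLp_two_iff_integrable_sq (by fun_prop)).2 ?_
  simp only [exp_add_mul_sq]
  simp only [exp_add]
  exact (integrable_exp_mul_gaussianReal (2 * b)).const_mul _

lemma variance_exp_add_mul_gaussianReal_pos (hv : v ≠ 0) {b : ℝ} (hb : b ≠ 0) (a : ℝ) :
    0 < Var[fun x ↦ exp (a + b * x); gaussianReal m v] := by
  rw [variance_eq_sub (memLp_exp_add_mul_gaussianReal a b)]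
  simp only [Pi.pow_apply, exp_add_mul_sq]
  rw [integral_exp_add_mul_gaussianReal, integral_exp_add_mul_gaussianReal, ← exp_nat_mul,
    sub_pos, exp_lt_exp]
  have : 0 < (v : ℝ) * b ^ 2 := by positivity
  push_cast
  linarith

end Lognormal

theorem stmt15 (a b : ℝ) (hb : 0 < b)
    (S : ℝ → ℝ) (hS : S = fun z => Real.exp (a + b*z))
    (A1 A2 A3 A4 A5 : ℝ → ℝ)
    (hA1 : A1 = fun K => ((gaussianReal 0 1) {z | K < S z}).toReal)
    (hA2 : A2 = fun K => ∫ z in {z | K < S z}, S z ∂(gaussianReal 0 1))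
    (hA3 : A3 = fun K => ∫ z in {z | S z ≤ K}, S z ∂(gaussianReal 0 1))
    (hA4 : A4 = fun K => ∫ z in {z | K < S z}, (S z)^2 ∂(gaussianReal 0 1))
    (hA5 : A5 = fun K => ∫ z in {z | S z ≤ K}, (S z)^2 ∂(gaussianReal 0 1))
    (hstar : ℝ → ℝ)
    (hhstar : hstar = fun K => (A4 K - K*A2 K + (A2 K + A3 K)*(K*A1 K - A2 K)) /
      (A4 K + A5 K - (A2 K + A3 K)^2))
    (Var : ℝ → ℝ)
    (hVar : Var = fun K => (∫ z, (-max 0 (S z - K) + hstar K * S z)^2 ∂(gaussianReal 0 1)) -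
      (∫ z, (-max 0 (S z - K) + hstar K * S z) ∂(gaussianReal 0 1))^2) :
    Tendsto (fun K => Real.sqrt (Var K)) (nhdsWithin 0 (Set.Ioi 0)) (nhds 0) := by
  set μ := gaussianReal 0 1
  have hSm : Measurable S := hS ▸ by fun_prop
  have hS2 : MemLp S 2 μ := hS ▸ memLp_exp_add_mul_gaussianReal a b
  have hS₀ : ∀ z, 0 ≤ S z := hS ▸ fun z ↦ (exp_pos _).le
  have hSvar : 0 < Var[S; μ] := hS ▸ variance_exp_add_mul_gaussianReal_pos one_ne_zero hb.ne' a
  have hstar_eq : ∀ K, hstar K = cov[fun z ↦ max 0 (S z - K), S; μ] / Var[S; μ] := by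
    intro K
    rw [covariance_max_zero_sub_div_variance hS2 hSm K, hhstar, hA1, hA2, hA3, hA4, hA5]
  have hVar_eq : ∀ K, Var K = Var[fun z ↦ -max 0 (S z - K) + hstar K * S z; μ] := by
    intro K
    have hF : MemLp (fun z ↦ -max 0 (S z - K) + hstar K * S z) 2 μ :=
      (hS2.max_zero_sub_const K).neg.add (hS2.const_mul _)
    rw [hVar, variance_eq_sub hF]
    rfl
  have hbound : ∀ K ∈ Ioi (0 : ℝ), √(Var K) ≤ K / 2 := by
    intro K hK
    rw [hVar_eq, hstar_eq, ← sqrt_sq (div_pos hK two_pos).le]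
    exact sqrt_le_sqrt (variance_call_hedge_le hS2 hS₀ hSvar hK.le)
  have hK : Tendsto (fun K : ℝ ↦ K / 2) (𝓝[>] 0) (𝓝 0) := by
    simpa using ((tendsto_id (x := 𝓝 (0 : ℝ))).div_const 2).mono_left nhdsWithin_le_nhds
  exact tendsto_of_tendsto_of_tendsto_of_le_of_le' tendsto_const_nhds hK
    (Eventually.of_forall fun K ↦ sqrt_nonneg _) (eventually_mem_nhdsWithin.mono hbound)
end
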